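/- Let V be a ℤ-graded vector space. The coproduct Δ on V[1]⊗S(V[1]) defined by Δ(x⊗1) = 0 and Δ(x_0⊗x_1⋯x_n) = Σ_{0≤k≤n-1, σ∈Sh_{k,1,n-k-1}} ε_x(σ) x_0⊗(x_{σ(1)}⋯x_{σ(k)}) ⊗ x_{σ(k+1)}⊗(x_{σ(k+2)}⋯x_{σ(n)}) satisfies the permutative cogebra identity (id⊗Δ)∘Δ = τ_{23}∘(id⊗Δ)∘Δ. -/

import Mathlib

/-!
Write `Δ(x₀ ⊗ w) = Σ ± (x₀ ⊗ w_I) ⊗ ι(w_J)`, where `ι = symEmb : S(V[1]) → V[1] ⊗ S(V[1])`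
singles out one letter of a symmetric word. The heart of the matter is the identity
`Δ ∘ ι = (ι ⊗ ι) ∘ δ`, with `δ` the unshuffle coproduct of `S(V[1])`; it is proved by induction
on the word, with the last factor of `Δ` kept as an unexpanded word until the end. Since `δ` is
graded cocommutative and `ι` preserves degrees, `Δ ∘ ι` is fixed by the graded flip, hence `τ₂₃`
fixes `(id ⊗ Δ) ∘ Δ` on the nose, not only modulo the graded-symmetry relations.
-/


noncomputable section
namespace PG

open Finsupp

/-- Free `K`-module on the type `α`. -/
abbrev FM (K : Type) [Field K] (α : Type) : Type := α →₀ K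

variable {K : Type} [Field K] {ι : Type}

/-- linear extension of a map defined on the canonical basis -/
def extL {α β : Type} (f : α → FM K β) : FM K α →ₗ[K] FM K β :=
  Finsupp.lift (FM K β) K α f

/-- the sign `(-1)^n` -/
def zsgn (K : Type) [Field K] (n : ℤ) : K := (-1 : K) ^ n

/-- sum of degrees of the entries of a list -/
def dsum {α : Type} (dg : α → ℤ) (l : List α) : ℤ := (l.map dg).sum

/-- enumerate the positions of a list: (prefix, element, suffix) -/
def focuses {α : Type} : List α → List (List α × α × List α)
  | [] => []
  | a :: l => ([], a, l) :: (focuses l).map (fun t => (a :: t.1, t.2.1, t.2.2))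

/-- sum of the values of `f` over a list -/
def fsum {α β : Type} [AddCommMonoid β] (l : List α) (f : α → β) : β := (l.map f).sum

/-- all splittings of a list into two complementary subsequences (I, J),
together with the Koszul sign of the corresponding unshuffle -/
def splits {α : Type} (K : Type) [Field K] (dg : α → ℤ) :
    List α → List (List α × List α × K)
  | [] => [([], [], 1)]
  | a :: l =>
      ((splits K dg l).map (fun t => (a :: t.1, t.2.1, t.2.2)))
      ++ ((splits K dg l).map
          (fun t => (t.1, a :: t.2.1, zsgn K (dg a * dsum dg t.1) * t.2.2)))

/-- `x₁⋯xₙ ↦ Σ_t ± xₜ ⊗ (x₁⋯ x̂ₜ ⋯xₙ)` : canonical embedding of a symmetric word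
into (generator) × (symmetric word), with Koszul signs. -/
def symEmb {α : Type} (K : Type) [Field K] (dg : α → ℤ) : List α → FM K (α × List α)
  | [] => 0
  | a :: l => Finsupp.single (a, l) 1
      + (symEmb K dg l).sum
          (fun b c => (c * zsgn K (dg b.1 * dg a)) • Finsupp.single (b.1, a :: b.2) 1)

/-- the cofree permutative coproduct on (head) ⊗ (symmetric word):
`Δ(x₀ ⊗ x₁⋯xₙ) = Σ_{I ⊔ J, J≠∅} ε (x₀ ⊗ x_I) ⊗ x_J` (second factor expanded by `symEmb`). -/
def permDelta {α : Type} (K : Type) [Field K] (dg : α → ℤ) (b : α × List α) :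
    FM K ((α × List α) × (α × List α)) :=
  fsum (splits K dg b.2) (fun t =>
    match t.2.1 with
    | [] => 0
    | _ => t.2.2 • Finsupp.mapDomain (fun e => ((b.1, t.1), e)) (symEmb K dg t.2.1))

/-- the graded (Koszul-signed) shuffle product on words -/
def shf (K : Type) [Field K] (ds : ι → ℤ) : List ι → List ι → FM K (List ι)
  | [], v => Finsupp.single v 1
  | u, [] => Finsupp.single u 1
  | a :: u, b :: v =>
      Finsupp.mapDomain (a :: ·) (shf K ds u (b :: v))
      + zsgn K (ds b * dsum ds (a :: u)) • Finsupp.mapDomain (b :: ·) (shf K ds (a :: u) v)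
  termination_by u v => u.length + v.length

/-- the iterated signed antisymmetrisation μₙ : μ₁ = id,
μ_{n+1} = μ_n ⊗ id − (μ_n ⊗ id) ∘ τ_{n+1}⁻¹ (Koszul-signed cyclic action). -/
def mu (K : Type) [Field K] (ds : ι → ℤ) : List ι → FM K (List ι)
  | [] => 0
  | [a] => Finsupp.single [a] 1
  | a :: b :: l =>
      Finsupp.mapDomain (fun w => w ++ [(b :: l).getLast (List.cons_ne_nil _ _)])
        (mu K ds ((a :: b :: l).dropLast))
      - zsgn K (ds a * dsum ds (b :: l)) •
          Finsupp.mapDomain (fun w => w ++ [a]) (mu K ds (b :: l))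
  termination_by w => w.length
  decreasing_by
  · simp
  · simp

/-- prepend a general vector (an element of the free module on `ι`) to words -/
def consV (g : FM K ι) (m : FM K (List ι)) : FM K (List ι) :=
  g.sum fun i c => c • Finsupp.mapDomain (i :: ·) m

/-- the nontrivial deconcatenations of a word -/
def cuts {α : Type} (w : List α) : List (List α × List α) :=
  (List.range (w.length - 1)).map (fun k => (w.take (k + 1), w.drop (k + 1)))

/-- the Koszul crossing exponent of a list of positions (each position `i`
carries the degree `degs i`): sum over inversions of products of degrees. -/
def crossExp (degs : ℕ → ℤ) : List ℕ → ℤ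
  | [] => 0
  | a :: l => ((l.filter (fun b => decide (b < a))).map (fun b => degs a * degs b)).sum
      + crossExp degs l

/-- degree of the letter at position `i` of the word `w` -/
def posDeg (ds : ι → ℤ) (w : List ι) (i : ℕ) : ℤ := (w.map ds).getD i 0

/-- subword of `w` on the set of positions `S` (kept in increasing order) -/
def subw (w : List ι) (S : Finset ℕ) : List ι :=
  ((w.zipIdx.map Prod.swap).filter (fun p => decide (p.1 ∈ S))).map Prod.snd

/-- the Koszul sign of the unshuffle of `w` rearranging its letters in the
order of positions given by `out` -/
def unshSgn (K : Type) [Field K] (ds : ι → ℤ) (w : List ι) (out : List ℕ) : K :=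
  zsgn K (crossExp (posDeg ds w) out)

/-- submodule spanned by a set of relations -/
def idealOf {α : Type} (S : Set (FM K α)) : Submodule K (FM K α) := Submodule.span K S

/-- the span, in the free module on `α × α`, of the relations of `S` put in either factor -/
def idealPair {α : Type} (S : Set (FM K α)) : Submodule K (FM K (α × α)) :=
  Submodule.span K
    ({x | ∃ c, ∃ p ∈ S, x = Finsupp.mapDomain (fun a => (a, c)) p} ∪
     {x | ∃ c, ∃ p ∈ S, x = Finsupp.mapDomain (fun a => (c, a)) p})

/-- the span, in the free module on `α × α × α`, of the relations of `S` put in any factor -/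
def idealTriple {α : Type} (S : Set (FM K α)) : Submodule K (FM K (α × α × α)) :=
  Submodule.span K
    ({x | ∃ c d, ∃ p ∈ S, x = Finsupp.mapDomain (fun a => (a, c, d)) p} ∪
     ({x | ∃ c d, ∃ p ∈ S, x = Finsupp.mapDomain (fun a => (c, a, d)) p} ∪
      {x | ∃ c d, ∃ p ∈ S, x = Finsupp.mapDomain (fun a => (c, d, a)) p}))

/-- graded-symmetry relations on words: `⋯ab⋯ − (−1)^{deg a · deg b} ⋯ba⋯` -/
def symRelW (K : Type) [Field K] (ds : ι → ℤ) : Set (FM K (List ι)) :=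
  {x | ∃ u : List ι, ∃ a b : ι, ∃ v : List ι,
    x = Finsupp.single (u ++ a :: b :: v) 1
      - zsgn K (ds a * ds b) • Finsupp.single (u ++ b :: a :: v) 1}

/-- shuffle relations: the images of all the shuffle products `sh_{p,q}`, `p,q ≥ 1` -/
def shRel (K : Type) [Field K] (ds : ι → ℤ) : Set (FM K (List ι)) :=
  {x | ∃ u v : List ι, u ≠ [] ∧ v ≠ [] ∧ x = shf K ds u v}

/-- graded-symmetry relations in the `List` (symmetric-word) part of `α × List α` -/
def symRelP {α : Type} (K : Type) [Field K] (dg : α → ℤ) : Set (FM K (α × List α)) :=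
  {x | ∃ h : α, ∃ l1 : List α, ∃ u v : α, ∃ l2 : List α,
    x = Finsupp.single (h, l1 ++ u :: v :: l2) 1
      - zsgn K (dg u * dg v) • Finsupp.single (h, l1 ++ v :: u :: l2) 1}

/-- the graded flip on the free module on `α × α` -/
def tauP {α : Type} (K : Type) [Field K] (dg : α → ℤ) :
    FM K (α × α) →ₗ[K] FM K (α × α) :=
  extL (fun p => zsgn K (dg p.1 * dg p.2) • Finsupp.single (p.2, p.1) 1)

/-- τ₁₂ = τ ⊗ id on triples -/
def tau12 {α : Type} (K : Type) [Field K] (dg : α → ℤ) :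
    FM K (α × α × α) →ₗ[K] FM K (α × α × α) :=
  extL (fun p => zsgn K (dg p.1 * dg p.2.1) • Finsupp.single (p.2.1, p.1, p.2.2) 1)

/-- τ₂₃ = id ⊗ τ on triples -/
def tau23 {α : Type} (K : Type) [Field K] (dg : α → ℤ) :
    FM K (α × α × α) →ₗ[K] FM K (α × α × α) :=
  extL (fun p => zsgn K (dg p.2.1 * dg p.2.2) • Finsupp.single (p.1, p.2.2, p.2.1) 1)

/-- `f ⊗ id` for a map `f` with values in two factors (no Koszul sign) -/
def firstT {α : Type} (f : α → FM K (α × α)) :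
    FM K (α × α) →ₗ[K] FM K (α × α × α) :=
  extL (fun p => Finsupp.mapDomain (fun q => (q.1, q.2, p.2)) (f p.1))

/-- `id ⊗ f` for a map `f` of degree `degf` with values in two factors (Koszul sign) -/
def secondT {α : Type} (dg : α → ℤ) (degf : ℤ) (f : α → FM K (α × α)) :
    FM K (α × α) →ₗ[K] FM K (α × α × α) :=
  extL (fun p => zsgn K (degf * dg p.1) •
    Finsupp.mapDomain (fun q => (p.1, q.1, q.2)) (f p.2))

/-- `f ⊗ id + id ⊗ f` for a coderivation-type map `f` of degree `degf` (Koszul sign) -/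
def coderT {α : Type} (dg : α → ℤ) (degf : ℤ) (f : α → FM K α) :
    FM K (α × α) →ₗ[K] FM K (α × α) :=
  extL (fun p => Finsupp.mapDomain (fun q => (q, p.2)) (f p.1)
      + zsgn K (degf * dg p.1) • Finsupp.mapDomain (fun q => (p.1, q)) (f p.2))

/-- homogeneity of an element of the free module on `α`, w.r.t. a degree on `α` -/
def IsHomog {α : Type} (dg : α → ℤ) (x : FM K α) (n : ℤ) : Prop :=
  ∀ a ∈ x.support, dg a = n


/-! ### coproducts on words -/

/-- the unshuffle coproduct of the cocommutative coassociative cogebra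
`S⁺(g[1])` (on word representatives):
`Δ(x₁⋯xₙ) = Σ_{I⊔J=[n], I,J≠∅} ε_x(I,J) x_I ⊗ x_J`. -/
def sDelta (K : Type) [Field K] (ds : ι → ℤ) (w : List ι) : FM K (List ι × List ι) :=
  ∑ S ∈ (Finset.range w.length).powerset.filter
      (fun S => S ≠ ∅ ∧ S ≠ Finset.range w.length),
    unshSgn K ds w
        (S.sort (· ≤ ·) ++ ((Finset.range w.length \ S).sort (· ≤ ·))) •
      Finsupp.single (subw w S, subw w (Finset.range w.length \ S)) 1

/-- the antisymmetrised deconcatenation cocrochet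
`δ(x₁⊗…⊗xₙ) = Σ_j (x₁…x_j) ⊗ (x_{j+1}…xₙ) − ε (x_{j+1}…xₙ) ⊗ (x₁…x_j)`. -/
def lieDelta (K : Type) [Field K] (ds : ι → ℤ) (w : List ι) :
    FM K (List ι × List ι) :=
  fsum (cuts w) (fun p =>
    Finsupp.single p 1
      - zsgn K (dsum ds p.1 * dsum ds p.2) • Finsupp.single (p.2, p.1) 1)

/-- the cofree Leibniz cogebra coproduct on `T⁺(V[1])`:
`δ(x₁⊗…⊗xₙ) = Σ_k (x₁⊗…⊗x_k) ⊗ μ_{n-k}(x_{k+1}⊗…⊗xₙ)`. -/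
def leibDelta (K : Type) [Field K] (ds : ι → ℤ) (w : List ι) :
    FM K (List ι × List ι) :=
  fsum (cuts w) (fun p => Finsupp.mapDomain (fun m => (p.1, m)) (mu K ds p.2))

/-! ### coderivation-type operators on words -/

/-- `Σ_k ± x₁⊗…⊗q₁(x_k)⊗…⊗xₙ` with Koszul prefix signs `(-1)^{Σ_{i<k} deg xᵢ}` -/
def repl1 (K : Type) [Field K] (ds : ι → ℤ) (q1 : ι → FM K ι) :
    List ι → FM K (List ι)
  | [] => 0
  | a :: l => (q1 a).sum (fun i c => c • Finsupp.single (i :: l) 1)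
      + zsgn K (ds a) • Finsupp.mapDomain (a :: ·) (repl1 K ds q1 l)

/-- `Σ_k ± x₁⊗…⊗q₂(x_k,x_{k+1})⊗…⊗xₙ` (collapse of every adjacent pair) with
Koszul prefix signs -/
def repl2 (K : Type) [Field K] (ds : ι → ℤ) (q2 : ι → ι → FM K ι) :
    List ι → FM K (List ι)
  | [] => 0
  | [_] => 0
  | a :: b :: l => (q2 a b).sum (fun i c => c • Finsupp.single (i :: l) 1)
      + zsgn K (ds a) • Finsupp.mapDomain (a :: ·) (repl2 K ds q2 (b :: l))

/-- collapse the leading pair with `q2h`, and every interior pair with `q2i` -/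
def headInt (K : Type) [Field K] (ds : ι → ℤ) (q2h q2i : ι → ι → FM K ι) :
    List ι → FM K (List ι)
  | [] => 0
  | [_] => 0
  | a :: b :: l => (q2h a b).sum (fun i c => c • Finsupp.single (i :: l) 1)
      + zsgn K (ds a) • Finsupp.mapDomain (a :: ·) (repl2 K ds q2i (b :: l))

/-- `D₂(α,β) = (−1)^{deg α} α∧β` on basis letters -/
def d2of (K : Type) [Field K] (ds : ι → ℤ) (w2 : ι → ι → FM K ι) (a b : ι) : FM K ι :=
  zsgn K (ds a) • w2 a b

/-- `D₂∘μ₂(α,β) = D₂(α,β) − (−1)^{deg α · deg β} D₂(β,α)` on basis letters -/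
def d2mu (K : Type) [Field K] (ds : ι → ℤ) (w2 : ι → ι → FM K ι) (a b : ι) : FM K ι :=
  d2of K ds w2 a b - zsgn K (ds a * ds b) • d2of K ds w2 b a

/-- the codifferential of the Leibniz cogebra `T⁺(𝒢[1])` determined by a product
`∧` (no differential part):
`D(α₁⊗…⊗αₙ) = D₂(α₁,α₂)⊗α₃⊗…⊗αₙ + Σ_k ± α₁⊗…⊗(D₂∘μ₂)(α_k,α_{k+1})⊗…⊗αₙ` -/
def Dpre (K : Type) [Field K] (ds : ι → ℤ) (w2 : ι → ι → FM K ι) :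
    List ι → FM K (List ι) :=
  headInt K ds (d2of K ds w2) (d2mu K ds w2)

/-! ### the extended bracket and the extension `R₂` of a pre-Lie product -/

/-- the extension of a degree −1 bracket `b2` to words:
`[X,Y] = Σ_{shuffles, adjacent pair (x from X, y from Y)} ± …⊗[x,y]⊗…` -/
def brS (K : Type) [Field K] (ds : ι → ℤ) (b2 : ι → ι → FM K ι) :
    List ι → List ι → FM K (List ι)
  | [], _ => 0
  | _, [] => 0
  | a :: u, b :: v =>
      Finsupp.mapDomain (a :: ·) (brS K ds b2 u (b :: v))
      + zsgn K (ds b * dsum ds (a :: u)) •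
          Finsupp.mapDomain (b :: ·) (brS K ds b2 (a :: u) v)
      + zsgn K (ds b * dsum ds u) • consV (b2 a b) (shf K ds u v)
  termination_by u v => u.length + v.length

/-- the bracketed tail terms of `R₂`:
`Σ_k u₁⊗…⊗u_{k-1}⊗[u_k,b]⊗sh(u_{k+1}…, v)` with signs -/
def r2brTail (K : Type) [Field K] (ds : ι → ℤ) (b2 : ι → ι → FM K ι) :
    List ι → ι → List ι → FM K (List ι)
  | [], _, _ => 0
  | x :: u, b, v =>
      zsgn K (ds b * dsum ds u) • consV (b2 x b) (shf K ds u v)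
      + Finsupp.mapDomain (x :: ·) (r2brTail K ds b2 u b v)

/-- `[α,β] = α◇β − (−1)^{deg α · deg β} β◇α` on basis letters -/
def brOf (K : Type) [Field K] (ds : ι → ℤ) (dia2 : ι → ι → FM K ι) (a b : ι) : FM K ι :=
  dia2 a b - zsgn K (ds a * ds b) • dia2 b a

/-- the extension `R₂` of the pre-Lie product `◇` to `T⁺(𝒢[1])`:
`R₂(α₁⊗…⊗αₚ, α_{p+1}⊗…⊗α_{p+q}) = ±(α₁◇α_{p+1})⊗sh(…) + Σ_k ± α₁⊗…⊗[α_k,α_{p+1}]⊗sh(…)` -/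
def R2w (K : Type) [Field K] (ds : ι → ℤ) (dia2 : ι → ι → FM K ι) :
    List ι → List ι → FM K (List ι)
  | [], _ => 0
  | _, [] => 0
  | a :: u, b :: v =>
      zsgn K (ds b * dsum ds u) • consV (dia2 a b) (shf K ds u v)
      + Finsupp.mapDomain (a :: ·) (r2brTail K ds (brOf K ds dia2) u b v)


/-! ### the construction on `H[1] ⊗ S(H[1])`, where `H = T⁺(𝒢[1])` -/

/-- the twice-shifted degree `deg'(X) = deg(X) − 1` of a word `X ∈ H[1]` -/
def dgp (ds : ι → ℤ) (w : List ι) : ℤ := dsum ds w - 1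

/-- basis of (word representatives of) `H[1] ⊗ S(H[1])` : a head word and a
list of factor words -/
abbrev BB (ι : Type) : Type := List ι × List (List ι)

/-- the `deg'`-degree of a basis element of `H[1] ⊗ S(H[1])` -/
def degB (ds : ι → ℤ) (b : BB ι) : ℤ := dgp ds b.1 + dsum (dgp ds) b.2

/-- embed a symmetric product whose first factor is a general element of `H` -/
def symEmbV (K : Type) [Field K] (ds : ι → ℤ) (g : FM K (List ι))
    (L : List (List ι)) : FM K (BB ι) :=
  g.sum fun w c => c • symEmb K (dgp ds) (w :: L)

/-- the coderivation `m` of `H[1] ⊗ S(H[1])` extending the codifferential `D` of `H`: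
`m(X₀⊗X₁⋯Xₙ) = D(X₀)⊗X₁⋯Xₙ + (−1)^{x₀'} Σ_j ± X₀⊗D(X_j)·X₁⋯ĵ⋯Xₙ` -/
def mB (K : Type) [Field K] (ds : ι → ℤ) (w2 : ι → ι → FM K ι) (b : BB ι) :
    FM K (BB ι) :=
  (Dpre K ds w2 b.1).sum (fun w c => c • Finsupp.single (w, b.2) 1)
  + zsgn K (dgp ds b.1) • fsum (focuses b.2) (fun t =>
      zsgn K (dgp ds t.2.1 * dsum (dgp ds) t.1) •
        (Dpre K ds w2 t.2.1).sum
          (fun w c => c • Finsupp.single (b.1, w :: (t.1 ++ t.2.2)) 1))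

/-- `R₂'(X,Y) = (−1)^{deg' X} R₂(X,Y)` -/
def R2p (K : Type) [Field K] (ds : ι → ℤ) (dia2 : ι → ι → FM K ι)
    (X Y : List ι) : FM K (List ι) :=
  zsgn K (dgp ds X) • R2w K ds dia2 X Y

/-- `ℓ₂(X,Y) = R₂'(X,Y) + (−1)^{deg'X · deg'Y} R₂'(Y,X)` -/
def ell2 (K : Type) [Field K] (ds : ι → ℤ) (dia2 : ι → ι → FM K ι)
    (X Y : List ι) : FM K (List ι) :=
  R2p K ds dia2 X Y + zsgn K (dgp ds X * dgp ds Y) • R2p K ds dia2 Y X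

/-- the coderivation `R` of `H[1] ⊗ S(H[1])` extending `R₂'`:
`R(X₀⊗X₁⋯Xₙ) = Σ_i ± R₂'(X₀,X_i)⊗X₁⋯î⋯Xₙ + (−1)^{x₀'} Σ_{i<j} ± X₀⊗ℓ₂(X_i,X_j)·X₁⋯îĵ⋯Xₙ` -/
def RB (K : Type) [Field K] (ds : ι → ℤ) (dia2 : ι → ι → FM K ι) (b : BB ι) :
    FM K (BB ι) :=
  fsum (focuses b.2) (fun t =>
    zsgn K (dgp ds t.2.1 * dsum (dgp ds) t.1) •
      (R2p K ds dia2 b.1 t.2.1).sum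
        (fun w c => c • Finsupp.single (w, t.1 ++ t.2.2) 1))
  + zsgn K (dgp ds b.1) • fsum (focuses b.2) (fun t1 =>
      fsum (focuses t1.2.2) (fun t2 =>
        zsgn K (dgp ds t1.2.1 * dsum (dgp ds) t1.1
            + dgp ds t2.2.1 * (dsum (dgp ds) t1.1 + dsum (dgp ds) t2.1)) •
          (ell2 K ds dia2 t1.2.1 t2.2.1).sum
            (fun w c => c • Finsupp.single (b.1, w :: (t1.1 ++ t2.1 ++ t2.2.2)) 1)))

/-- the Leibniz-type coproduct `κ` on `H[1] ⊗ S(H[1])`: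
`κ(X₀⊗X₁⋯Xₙ) = Σ_{U₀⊗V₀=X₀, I⊔J} (−1)^{u₀'} ( ε (U₀⊗X_I) ⊗ μV₀·X_J
+ ε (μV₀⊗X_J) ⊗ U₀·X_I ) + (−1)^{x₀'} X₀⊗κ'(X₁⋯Xₙ)` -/
def kappaB (K : Type) [Field K] (ds : ι → ℤ) (b : BB ι) :
    FM K (BB ι × BB ι) :=
  fsum (cuts b.1) (fun uv =>
    fsum (splits K (dgp ds) b.2) (fun t =>
      (zsgn K (dgp ds uv.1) * t.2.2 * zsgn K (dgp ds uv.2 * dsum (dgp ds) t.1)) •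
        Finsupp.mapDomain (fun e => ((uv.1, t.1), e))
          (symEmbV K ds (mu K ds uv.2) t.2.1)
      + (zsgn K (dgp ds uv.1) * t.2.2 * zsgn K (dgp ds uv.1 * dgp ds uv.2)
            * zsgn K (dgp ds uv.1 * dsum (dgp ds) t.1)) •
          (mu K ds uv.2).sum (fun m c =>
            c • Finsupp.mapDomain (fun e => ((m, t.1), e))
                  (symEmb K (dgp ds) (uv.1 :: t.2.1)))))
  + zsgn K (dgp ds b.1) • fsum (focuses b.2) (fun tf =>
      fsum (cuts tf.2.1) (fun uv =>
        fsum (splits K (dgp ds) tf.1) (fun tp =>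
          fsum (splits K (dgp ds) tf.2.2) (fun tq =>
            (zsgn K (dsum (dgp ds) tf.1) * zsgn K (dgp ds uv.1)
                * tp.2.2 * tq.2.2
                * zsgn K (dsum (dgp ds) tp.2.1 * dsum (dgp ds) tq.1
                    + dgp ds tf.2.1 * (dsum (dgp ds) tp.2.1 + dsum (dgp ds) tq.1))
                * zsgn K (dsum (dgp ds) tp.2.1 + dsum (dgp ds) tq.1)) •
              (Finsupp.mapDomain (fun e => ((b.1, tp.1 ++ tq.1 ++ [uv.1]), e))
                  (symEmbV K ds (mu K ds uv.2) (tp.2.1 ++ tq.2.1))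
               + zsgn K (dgp ds uv.1 * dgp ds uv.2) •
                  (mu K ds uv.2).sum (fun m c =>
                    c • Finsupp.mapDomain (fun e => ((b.1, tp.1 ++ tq.1 ++ [m]), e))
                          (symEmb K (dgp ds) (uv.1 :: (tp.2.1 ++ tq.2.1)))))))))

variable {α β γ : Type}

lemma zsgn_zero : zsgn K 0 = 1 := zpow_zero _

lemma zsgn_add (m n : ℤ) : zsgn K (m + n) = zsgn K m * zsgn K n :=
  zpow_add₀ (by norm_num) m n

lemma zsgn_congr {m n : ℤ} (h : Even (m - n)) : zsgn K m = zsgn K n := by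
  rw [← sub_add_cancel m n, zsgn_add, zsgn, h.neg_one_zpow, one_mul]

section FSum

variable {M N : Type} [AddCommMonoid M] [AddCommMonoid N] [Module K M] [Module K N]

lemma fsum_append (l₁ l₂ : List α) (f : α → M) :
    fsum (l₁ ++ l₂) f = fsum l₁ f + fsum l₂ f := by
  simp [fsum]

lemma fsum_map (g : α → β) (l : List α) (f : β → M) :
    fsum (l.map g) f = fsum l (fun a => f (g a)) := by
  simp [fsum, Function.comp_def]

lemma fsum_congr {l : List α} {f g : α → M} (h : ∀ a ∈ l, f a = g a) :
    fsum l f = fsum l g :=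
  congrArg List.sum (List.map_congr_left h)

lemma map_fsum (L : M →ₗ[K] N) (l : List α) (f : α → M) :
    L (fsum l f) = fsum l (fun a => L (f a)) := by
  simp [fsum, map_list_sum, Function.comp_def]

lemma fsum_add (l : List α) (f g : α → M) :
    fsum l (fun a => f a + g a) = fsum l f + fsum l g := by
  simp [fsum, List.sum_map_add]

lemma smul_fsum (c : K) (l : List α) (f : α → M) :
    c • fsum l f = fsum l (fun a => c • f a) :=
  map_fsum (LinearMap.lsmul K M c) l f

end FSum

section ExtL

lemma extL_eq_linearCombination (f : α → FM K β) : extL f = Finsupp.linearCombination K f := rfl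

@[simp] lemma extL_single (f : α → FM K β) (a : α) (c : K) :
    extL f (single a c) = c • f a :=
  Finsupp.linearCombination_single K c a

lemma map_extL (L : FM K β →ₗ[K] FM K γ) (f : α → FM K β) (x : FM K α) :
    L (extL f x) = extL (fun a => L (f a)) x :=
  Finsupp.apply_linearCombination K L f x

lemma extL_mapDomain (f : β → FM K γ) (g : α → β) (x : FM K α) :
    extL f (mapDomain g x) = extL (fun a => f (g a)) x :=
  Finsupp.linearCombination_mapDomain K g x

lemma mapDomain_extL (g : β → γ) (f : α → FM K β) (x : FM K α) :
    mapDomain g (extL f x) = extL (fun a => mapDomain g (f a)) x :=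
  map_extL (Finsupp.lmapDomain K K g) f x

lemma mapDomain_eq_extL (g : α → β) (x : FM K α) :
    mapDomain g x = extL (fun a => single (g a) 1) x := by
  simp only [extL_eq_linearCombination, Finsupp.linearCombination_apply, Finsupp.smul_single_one]
  rfl

lemma extL_congr {f g : α → FM K β} {x : FM K α} (h : ∀ a ∈ x.support, f a = g a) :
    extL f x = extL g x := by
  simp only [extL_eq_linearCombination, Finsupp.linearCombination_apply]
  exact Finsupp.sum_congr fun a ha => by rw [h a ha]

lemma extL_smul_left (c : K) (f : α → FM K β) (x : FM K α) :
    extL (fun a => c • f a) x = c • extL f x := by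
  simp [extL_eq_linearCombination, Finsupp.linearCombination_apply, Finsupp.smul_sum, smul_comm c]

lemma extL_add_left (f g : α → FM K β) (x : FM K α) :
    extL (fun a => f a + g a) x = extL f x + extL g x := by
  simp [extL_eq_linearCombination, Finsupp.linearCombination_apply, Finsupp.sum_add]


lemma extL_extL_comm {δ : Type} (u : β → γ → FM K δ) (x : FM K β) (y : FM K γ) :
    extL (fun b => extL (u b) y) x = extL (fun c => extL (fun b => u b c) x) y := by
  simp only [extL_eq_linearCombination, Finsupp.linearCombination_apply, Finsupp.smul_sum]
  rw [Finsupp.sum_comm]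
  exact Finsupp.sum_congr fun _ _ => Finsupp.sum_congr fun _ _ => smul_comm _ _ _

end ExtL

section Tensor

def ftmul (x : FM K β) (y : FM K γ) : FM K (β × γ) :=
  extL (fun b => mapDomain (Prod.mk b) y) x

lemma ftmul_eq_extL_right (x : FM K β) (y : FM K γ) :
    ftmul x y = extL (fun c => mapDomain (·, c) x) y := by
  simp only [ftmul, mapDomain_eq_extL]
  exact extL_extL_comm (fun b c => single (b, c) 1) x y

lemma tauP_ftmul (dg : β → ℤ) {x y : FM K β} {m n : ℤ} (hx : IsHomog dg x m)
    (hy : IsHomog dg y n) :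
    tauP K dg (ftmul x y) = zsgn K (m * n) • ftmul y x := by
  rw [ftmul, map_extL, ftmul_eq_extL_right, ← extL_smul_left]
  refine extL_congr fun b hb => ?_
  rw [tauP, extL_mapDomain, mapDomain_eq_extL, ← extL_smul_left]
  refine extL_congr fun c hc => ?_
  simp only [hx b hb, hy c hc, mul_comm m n]

end Tensor

section Words

variable (dg : α → ℤ)

lemma dsum_cons (a : α) (l : List α) : dsum dg (a :: l) = dg a + dsum dg l := by
  simp [dsum]

lemma symEmb_cons (a : α) (l : List α) :
    symEmb K dg (a :: l) = single (a, l) 1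
      + extL (fun b => zsgn K (dg b.1 * dg a) • single (b.1, a :: b.2) (1 : K))
          (symEmb K dg l) := by
  simp only [symEmb, extL, Finsupp.lift_apply, mul_smul]

lemma isHomog_symEmb (w : List α) :
    IsHomog (fun e => dg e.1 + dsum dg e.2) (symEmb K dg w) (dsum dg w) := by
  classical
  induction w with
  | nil => simp [IsHomog, symEmb]
  | cons a l ih =>
    intro e he
    rw [symEmb_cons, extL_eq_linearCombination, Finsupp.linearCombination_apply] at he
    rcases Finset.mem_union.mp (Finsupp.support_add he) with h | h
    · rw [Finset.mem_singleton.mp (Finsupp.support_single_subset h), dsum_cons]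
    · obtain ⟨b, hb, hbe⟩ := Finset.mem_biUnion.mp (Finsupp.support_sum h)
      have hbe' := Finsupp.support_single_subset
        (Finsupp.support_smul (Finsupp.support_smul hbe))
      have hb' := ih b hb
      rw [Finset.mem_singleton.mp hbe']
      simp only [dsum_cons] at hb' ⊢
      linarith

lemma fsum_splits_swap {M : Type} [AddCommMonoid M] [Module K M] (w : List α)
    (f : List α → List α → M) :
    fsum (splits K dg w) (fun s => s.2.2 • f s.1 s.2.1)
      = fsum (splits K dg w)
          (fun s => (zsgn K (dsum dg s.1 * dsum dg s.2.1) * s.2.2) • f s.2.1 s.1) := by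
  induction w generalizing f with
  | nil => simp [splits, fsum, dsum, zsgn_zero]
  | cons a l ih =>
    have h₂ := ih fun I J => zsgn K (dg a * dsum dg I) • f I (a :: J)
    simp only [splits, fsum_append, fsum_map, dsum_cons]
    rw [ih fun I J => f (a :: I) J, add_comm]
    congr 1
    · refine (fsum_congr fun s _ => ?_).trans (h₂.trans (fsum_congr fun s _ => ?_))
      · rw [smul_smul, mul_comm]
      · rw [smul_smul, mul_right_comm, ← zsgn_add]
        congr 3
        ring
    · refine fsum_congr fun s _ => ?_
      rw [← mul_assoc, ← zsgn_add]
      congr 2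
      exact (zsgn_congr ⟨dg a * dsum dg s.1, by ring⟩).symm

end Words

section Delta

variable (dg : α → ℤ)

def permDeltaW (K : Type) [Field K] (dg : α → ℤ) (e : α × List α) :
    FM K ((α × List α) × List α) :=
  fsum (splits K dg e.2) fun t => t.2.2 • single ((e.1, t.1), t.2.1) 1

lemma permDelta_eq_extL_permDeltaW (e : α × List α) :
    permDelta K dg e
      = extL (fun p => mapDomain (Prod.mk p.1) (symEmb K dg p.2)) (permDeltaW K dg e) := by
  rw [permDeltaW, map_fsum, permDelta]
  refine fsum_congr fun ⟨I, J, c⟩ _ => ?_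
  cases J <;> simp [symEmb]

def insertLeft (K : Type) [Field K] (dg : α → ℤ) (a : α) :
    FM K ((α × List α) × List α) →ₗ[K] FM K ((α × List α) × List α) :=
  extL fun p => zsgn K (dg p.1.1 * dg a) • single ((p.1.1, a :: p.1.2), p.2) 1

def insertRight (K : Type) [Field K] (dg : α → ℤ) (a : α) :
    FM K ((α × List α) × List α) →ₗ[K] FM K ((α × List α) × List α) :=
  extL fun p => zsgn K (dg a * (dg p.1.1 + dsum dg p.1.2)) • single (p.1, a :: p.2) 1

lemma permDeltaW_cons (a : α) (b : α × List α) :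
    zsgn K (dg b.1 * dg a) • permDeltaW K dg (b.1, a :: b.2)
      = insertLeft K dg a (permDeltaW K dg b) + insertRight K dg a (permDeltaW K dg b) := by
  simp only [permDeltaW, splits, fsum_append, fsum_map, smul_add, smul_fsum, map_fsum,
    insertLeft, insertRight, map_smul, extL_single, smul_smul, one_mul]
  congr 1
  · exact fsum_congr fun t _ => by rw [mul_comm]
  · refine fsum_congr fun t _ => ?_
    rw [← mul_assoc, ← zsgn_add, mul_comm t.2.2]
    congr 3
    ring

lemma mapDomain_symEmb_cons (a : α) (I J : List α) :
    mapDomain (·, J) (symEmb K dg (a :: I))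
      = single ((a, I), J) 1 + insertLeft K dg a (mapDomain (·, J) (symEmb K dg I)) := by
  rw [symEmb_cons, mapDomain_add, mapDomain_single, mapDomain_extL, insertLeft, extL_mapDomain]
  simp only [mapDomain_smul, mapDomain_single]

lemma insertRight_mapDomain_symEmb (a : α) (I J : List α) :
    insertRight K dg a (mapDomain (·, J) (symEmb K dg I))
      = zsgn K (dg a * dsum dg I) • mapDomain (·, a :: J) (symEmb K dg I) := by
  rw [insertRight, extL_mapDomain, mapDomain_eq_extL, ← extL_smul_left]
  refine extL_congr fun e he => ?_
  have hdeg : dg e.1 + dsum dg e.2 = dsum dg I := isHomog_symEmb dg I e he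
  rw [hdeg]

lemma extL_permDeltaW_symEmb (w : List α) :
    extL (permDeltaW K dg) (symEmb K dg w)
      = fsum (splits K dg w) fun s => s.2.2 • mapDomain (·, s.2.1) (symEmb K dg s.1) := by
  induction w with
  | nil => simp [symEmb, splits, fsum]
  | cons a l ih =>
    have hL : extL (permDeltaW K dg) (symEmb K dg (a :: l))
        = permDeltaW K dg (a, l) + (insertLeft K dg a (extL (permDeltaW K dg) (symEmb K dg l))
          + insertRight K dg a (extL (permDeltaW K dg) (symEmb K dg l))) := by
      rw [symEmb_cons, map_add, extL_single, one_smul, map_extL, map_extL, map_extL,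
        ← extL_add_left]
      refine congrArg (fun f => _ + extL f (symEmb K dg l)) (funext fun b => ?_)
      rw [map_smul, extL_single, one_smul, permDeltaW_cons]
    rw [hL, ih, splits, fsum_append, fsum_map, fsum_map, map_fsum, map_fsum]
    simp only [map_smul, mapDomain_symEmb_cons, insertRight_mapDomain_symEmb, smul_add, fsum_add,
      smul_smul, mul_comm _ (zsgn K _)]
    rw [add_assoc, permDeltaW]

lemma extL_permDelta_symEmb (w : List α) :
    extL (permDelta K dg) (symEmb K dg w)
      = fsum (splits K dg w) fun s => s.2.2 • ftmul (symEmb K dg s.1) (symEmb K dg s.2.1) := by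
  have hΔ : (fun e => extL (fun p => mapDomain (Prod.mk p.1) (symEmb K dg p.2))
      (permDeltaW K dg e)) = permDelta K dg :=
    funext fun e => (permDelta_eq_extL_permDeltaW dg e).symm
  have h := congrArg (extL (K := K) fun p : (α × List α) × List α => mapDomain (Prod.mk p.1)
    (symEmb K dg p.2)) (extL_permDeltaW_symEmb dg w)
  rw [map_extL, hΔ, map_fsum] at h
  simp only [map_smul, extL_mapDomain] at h
  exact h

lemma tauP_extL_permDelta_symEmb (w : List α) :
    tauP K (fun e => dg e.1 + dsum dg e.2) (extL (permDelta K dg) (symEmb K dg w))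
      = extL (permDelta K dg) (symEmb K dg w) := by
  rw [extL_permDelta_symEmb, map_fsum,
    fsum_splits_swap dg w fun I J => ftmul (symEmb K dg I) (symEmb K dg J)]
  refine fsum_congr fun s _ => ?_
  rw [map_smul, tauP_ftmul _ (isHomog_symEmb dg _) (isHomog_symEmb dg _), smul_smul, mul_comm]

end Delta

lemma tau23_mapDomain_prodMk (dg : β → ℤ) (b : β) (y : FM K (β × β)) :
    tau23 K dg (mapDomain (Prod.mk b) y) = mapDomain (Prod.mk b) (tauP K dg y) := by
  rw [tau23, tauP, extL_mapDomain, mapDomain_extL]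
  simp only [mapDomain_smul, mapDomain_single]

lemma secondT_zero (dg : β → ℤ) (f : β → FM K (β × β)) :
    secondT dg 0 f = extL fun p => mapDomain (Prod.mk p.1) (f p.2) := by
  simp [secondT, zsgn_zero]

lemma tau23_secondT_permDelta (dg : α → ℤ) (x : FM K (α × List α)) :
    tau23 K (fun e => dg e.1 + dsum dg e.2)
        (secondT (fun e => dg e.1 + dsum dg e.2) 0 (permDelta K dg) (extL (permDelta K dg) x))
      = secondT (fun e => dg e.1 + dsum dg e.2) 0 (permDelta K dg)
          (extL (permDelta K dg) x) := by
  simp only [secondT_zero, map_extL]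
  refine congrArg (fun f => extL f x) (funext fun e => ?_)
  rw [permDelta_eq_extL_permDeltaW dg e, map_extL, map_extL]
  refine congrArg (fun f => extL f _) (funext fun q => ?_)
  have key := congrArg (mapDomain (M := K) (Prod.mk q.1)) (tauP_extL_permDelta_symEmb dg q.2)
  rw [← tau23_mapDomain_prodMk, mapDomain_extL, map_extL] at key
  simpa only [extL_mapDomain] using key

/-- Let `V` be a ℤ-graded vector space (free on a homogeneous
basis `ι` with degrees `dI`).  The coproduct `Δ` on `V[1]⊗S(V[1])` (modelled on
pairs (head, list of factors), with the graded-symmetry relations in the list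
part) defined by `Δ(x⊗1) = 0` and
`Δ(x₀⊗x₁⋯xₙ) = Σ_{k,σ∈Sh_{k,1,n−k−1}} ε_x(σ) x₀⊗(x_{σ(1)}⋯x_{σ(k)}) ⊗
x_{σ(k+1)}⊗(x_{σ(k+2)}⋯x_{σ(n)})` satisfies the permutative cogebra identity
`(id⊗Δ)∘Δ = τ₂₃∘(id⊗Δ)∘Δ`. -/
theorem stmt5 (K ι : Type) [Field K] (dI : ι → ℤ) :
    -- `ds` is the shifted degree `deg(x) = |x| − 1` on `V[1]`,
    -- `degP` the induced degree on `V[1]⊗S(V[1])`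
    ∀ ds : ι → ℤ, ds = (fun i => dI i - 1) →
    ∀ degP : ι × List ι → ℤ, degP = (fun p => ds p.1 + dsum ds p.2) →
    ∀ x : FM K (ι × List ι),
      secondT degP 0 (permDelta K ds) (extL (permDelta K ds) x)
        - tau23 K degP (secondT degP 0 (permDelta K ds) (extL (permDelta K ds) x))
        ∈ idealTriple (symRelP K ds) := by
  rintro ds - degP rfl x
  rw [tau23_secondT_permDelta, sub_self]
  exact zero_mem _

end PG
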